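/- arXiv:2603.18903 — 2 statements merged into one kernel-verified Lean document; each statement's English description precedes it below -/
import Mathlib

section
/- For all real U > 0 and λ with 0 < λ < 1, the inequality 14U + 5λ·v₁ + 7λ·v₂ − 12λ·v₃ > 0 holds, where v₁ = −(20λ²+λ+42)U/((7−λ)(3−λ)(2−λ)), v₂ = −6(7+6λ)U/((7−λ)(3−λ)), and v₃ = −21(7+4λ)U/((7−λ)(7−2λ)). (Base case of the Bellman inequality 14U + 5λ v(L−2,L−3) + 7λ v(L−2,L−2) − 12λ v(L,L−3) > 0.) -/
/-! Over the common denominator `(7 - λ)(3 - λ)(2 - λ)(7 - 2λ)`, positive for `λ < 2`, the left-hand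
side becomes `U` times the quartic `732λ⁴ - 2216λ³ - 357λ² - 196λ + 4116`, which is positive on
`[-1, 1]`: its quartic term is nonnegative and `4116 > 2216 + 357 + 196`. -/

lemma bellman_base_eq_div (U l : ℝ) (h7 : 7 - l ≠ 0) (h3 : 3 - l ≠ 0) (h2 : 2 - l ≠ 0)
    (h72 : 7 - 2 * l ≠ 0) :
    14 * U + 5 * l * (-((20 * l ^ 2 + l + 42) * U) / ((7 - l) * (3 - l) * (2 - l)))
      + 7 * l * (-(6 * (7 + 6 * l) * U) / ((7 - l) * (3 - l)))
      - 12 * l * (-(21 * (7 + 4 * l) * U) / ((7 - l) * (7 - 2 * l)))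
      = U * (732 * l ^ 4 - 2216 * l ^ 3 - 357 * l ^ 2 - 196 * l + 4116)
        / ((7 - l) * (3 - l) * (2 - l) * (7 - 2 * l)) := by
  rw [mul_comm] at h72
  field_simp
  ring

lemma bellman_base_numerator_pos {l : ℝ} (hl : |l| ≤ 1) :
    0 < 732 * l ^ 4 - 2216 * l ^ 3 - 357 * l ^ 2 - 196 * l + 4116 := by
  have hl2 : l ^ 2 ≤ 1 := by nlinarith [abs_le.mp hl, sq_abs l, abs_nonneg l]
  have hl3 : l ^ 3 ≤ 1 := by
    calc l ^ 3 ≤ |l| ^ 3 := (le_abs_self _).trans (abs_pow l 3).le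
      _ ≤ 1 := pow_le_one₀ (abs_nonneg l) hl
  nlinarith [pow_two_nonneg (l ^ 2), (abs_le.mp hl).1]

theorem stmt_11 (U l : ℝ) (hU : 0 < U) (h0 : 0 < l) (h1 : l < 1) :
    14 * U + 5 * l * (-((20 * l ^ 2 + l + 42) * U) / ((7 - l) * (3 - l) * (2 - l)))
      + 7 * l * (-(6 * (7 + 6 * l) * U) / ((7 - l) * (3 - l)))
      - 12 * l * (-(21 * (7 + 4 * l) * U) / ((7 - l) * (7 - 2 * l))) > 0 := by
  have h7 : 0 < 7 - l := by linarith
  have h3 : 0 < 3 - l := by linarith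
  have h2 : 0 < 2 - l := by linarith
  have h72 : 0 < 7 - 2 * l := by linarith
  rw [bellman_base_eq_div U l h7.ne' h3.ne' h2.ne' h72.ne']
  have hnum := bellman_base_numerator_pos (abs_le.mpr ⟨by linarith, h1.le⟩)
  positivity
end

section
/- For all real U > 0 and λ with 0 < λ < 1, the inequality v₁ + 3v₂ − 4v₃ > 0 holds, where v₁ = −(20λ²+λ+42)U/((7−λ)(3−λ)(2−λ)), v₂ = −6(7+6λ)U/((7−λ)(3−λ)), and v₃ = −21(7+4λ)U/((7−λ)(7−2λ)). (Base case of the Bellman inequality v(L−2,j) + 3 v(L−2,j+1) − 4 v(L,j) > 0 at j = L−3.) -/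
/-! Over the common denominator `(7 - λ)(3 - λ)(2 - λ)(7 - 2λ)` the combination becomes
`U (1470 - 973λ - 294λ² + 160λ³)`. The four factors are positive for `λ < 2`, and on `(0, 1]`
the cubic is at least `1470 - 973 - 294 > 0`. -/

theorem bellman_combination_eq {K : Type*} [Field K] (U l : K) (h7 : 7 - l ≠ 0)
    (h3 : 3 - l ≠ 0) (h2 : 2 - l ≠ 0) (h72 : 7 - 2 * l ≠ 0) :
    (-((20 * l ^ 2 + l + 42) * U) / ((7 - l) * (3 - l) * (2 - l)))
      + 3 * (-(6 * (7 + 6 * l) * U) / ((7 - l) * (3 - l)))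
      - 4 * (-(21 * (7 + 4 * l) * U) / ((7 - l) * (7 - 2 * l)))
      = U * (1470 - 973 * l - 294 * l ^ 2 + 160 * l ^ 3)
        / ((7 - l) * (3 - l) * (2 - l) * (7 - 2 * l)) := by
  rw [mul_div_assoc', mul_div_assoc', div_add_div _ _ (by simp [*]) (by simp [*]),
    div_sub_div _ _ (by simp [*]) (by simp [*]), div_eq_div_iff (by simp [*]) (by simp [*])]
  ring

theorem bellman_cubic_pos {l : ℝ} (h0 : 0 < l) (h1 : l ≤ 1) :
    0 < 1470 - 973 * l - 294 * l ^ 2 + 160 * l ^ 3 := by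
  have hsq : l ^ 2 ≤ 1 := pow_le_one₀ h0.le h1
  nlinarith [pow_pos h0 3]

theorem stmt_12 (U l : ℝ) (hU : 0 < U) (h0 : 0 < l) (h1 : l < 1) :
    (-((20 * l ^ 2 + l + 42) * U) / ((7 - l) * (3 - l) * (2 - l)))
      + 3 * (-(6 * (7 + 6 * l) * U) / ((7 - l) * (3 - l)))
      - 4 * (-(21 * (7 + 4 * l) * U) / ((7 - l) * (7 - 2 * l))) > 0 := by
  have h7 : 0 < 7 - l := by linarith
  have h3 : 0 < 3 - l := by linarith
  have h2 : 0 < 2 - l := by linarith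
  have h72 : 0 < 7 - 2 * l := by linarith
  rw [bellman_combination_eq U l h7.ne' h3.ne' h2.ne' h72.ne']
  exact div_pos (mul_pos hU (bellman_cubic_pos h0 h1.le))
    (mul_pos (mul_pos (mul_pos h7 h3) h2) h72)
end
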